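/- arXiv:2105.14650 — 18 statements merged into one kernel-verified Lean document; each statement's English description precedes it below -/
import Mathlib

section
/- Let (A, *, α) be a Hom-Jacobi-Jordan algebra over a field K of characteristic 0 and let β : A → A be a morphism of (A, *, α) to itself, i.e. a linear map with β(x*y) = β(x)*β(y) for all x, y ∈ A and β∘α = α∘β. Then for every natural number n, the triple (A, *_{βⁿ}, βⁿ∘α), where x *_{βⁿ} y := βⁿ(x*y), is again a Hom-Jacobi-Jordan algebra. -/
/-- A Hom-Jacobi-Jordan algebra structure: the multiplication is bilinear and
commutative, the structure map is multiplicative, and the Hom-Jacobi identity holds. -/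
def IsHomJJ {K A : Type*} [Field K] [AddCommGroup A] [Module K A]
    (mul : A → A → A) (α : A →ₗ[K] A) : Prop :=
  (∀ x y z : A, mul (x + y) z = mul x z + mul y z) ∧
  (∀ (c : K) (x y : A), mul (c • x) y = c • mul x y) ∧
  (∀ x y z : A, mul x (y + z) = mul x y + mul x z) ∧
  (∀ (c : K) (x y : A), mul x (c • y) = c • mul x y) ∧
  (∀ x y : A, α (mul x y) = mul (α x) (α y)) ∧
  (∀ x y : A, mul x y = mul y x) ∧
  (∀ x y z : A, mul (mul x y) (α z) + mul (mul y z) (α x) + mul (mul z x) (α y) = 0)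

/-- If (A, *, α) is a Hom-Jacobi-Jordan algebra and β is a self-morphism
of it, then (A, *_{βⁿ}, βⁿ∘α) with x *_{βⁿ} y := βⁿ(x*y) is again a
Hom-Jacobi-Jordan algebra, for every natural number n. -/
theorem stmt_0 {K A : Type*} [Field K] [CharZero K] [AddCommGroup A] [Module K A]
    (mul : A → A → A) (α : A →ₗ[K] A)
    (hA : IsHomJJ mul α)
    (β : A →ₗ[K] A)
    (hβmul : ∀ x y : A, β (mul x y) = mul (β x) (β y))
    (hβα : ∀ x : A, β (α x) = α (β x))
    (n : ℕ) :
    IsHomJJ (fun x y => (β ^ n) (mul x y)) ((β ^ n) ∘ₗ α) := by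
  obtain ⟨h1, h2, h3, h4, hα, hcomm, hjac⟩ := hA
  have hpow : ∀ m (x y : A), (β ^ m) (mul x y) = mul ((β ^ m) x) ((β ^ m) y) := by
    intro m
    induction m with
    | zero => simp
    | succ k ih =>
      intro x y
      rw [pow_succ]
      simp only [Module.End.mul_apply]
      rw [hβmul, ih]
  have hpowα : ∀ m (x : A), (β ^ m) (α x) = α ((β ^ m) x) := by
    intro m
    induction m with
    | zero => simp
    | succ k ih =>
      intro x
      rw [pow_succ]
      simp only [Module.End.mul_apply]
      rw [hβα, ih]
  refine ⟨?_, ?_, ?_, ?_, ?_, ?_, ?_⟩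
  · intro x y z; dsimp only; rw [h1]; exact map_add _ _ _
  · intro c x y; dsimp only; rw [h2]; exact map_smul _ _ _
  · intro x y z; dsimp only; rw [h3]; exact map_add _ _ _
  · intro c x y; dsimp only; rw [h4]; exact map_smul _ _ _
  · intro x y
    simp only [LinearMap.comp_apply]
    rw [← hpow n (α x) (α y), ← hα, hpowα, hpowα]; rw [hpowα]
  · intro x y; dsimp only; rw [hcomm]
  · intro x y z
    simp only [LinearMap.comp_apply]
    rw [← hpow, ← hpow, ← hpow, ← map_add, ← map_add, ← map_add, ← map_add,
      hjac, map_zero, map_zero]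
end

section
/- Every Hom-Jacobi-Jordan algebra (A, *, α) over a field K of characteristic 0 is a Hom-Jordan algebra; that is, the Hom-Jordan identity as_α(x*x, α(y), α(x)) = 0 holds for all x, y ∈ A, where as_α(u, v, w) := (u*v)*α(w) − α(u)*(v*w). -/
/-- Every Hom-Jacobi-Jordan algebra is a Hom-Jordan algebra:
the Hom-Jordan identity as_α(x*x, α(y), α(x)) = 0 holds, where
as_α(u, v, w) := (u*v)*α(w) − α(u)*(v*w). -/
theorem stmt_1 {K A : Type*} [Field K] [CharZero K] [AddCommGroup A] [Module K A]
    (mul : A → A → A) (α : A →ₗ[K] A)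
    (hA : IsHomJJ mul α) :
    ∀ x y : A,
      mul (mul (mul x x) (α y)) (α (α x)) - mul (α (mul x x)) (mul (α y) (α x)) = 0 := by
  obtain ⟨ha, hsl, hr, hsr, hm, hc, hj⟩ := hA
  intro x y
  have hneg : ∀ u v : A, mul (-u) v = - mul u v := by
    intro u v
    have h := hsl (-1 : K) u v
    simpa using h
  have h1 := hj x x y
  rw [hc y x, add_assoc] at h1
  have e1 : mul (mul x x) (α y)
      = -(mul (mul x y) (α x) + mul (mul x y) (α x)) :=
    eq_neg_of_add_eq_zero_left h1
  have h2 := hj (mul x y) (α x) (α x)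
  rw [hm x y, hc (α x) (mul x y)] at h2
  rw [e1, hneg, ha, hm x x, hc (α y) (α x)]
  set P := mul (mul (mul x y) (α x)) (α (α x)) with hP
  set Q := mul (mul (α x) (α x)) (mul (α x) (α y)) with hQ
  have : -(P + P) - Q = -(P + Q + P) := by abel
  rw [this, h2, neg_zero]
end

section
/- Let (A, ·, α) be a Hom-associative algebra over a field K of characteristic 0, and define x⋆y := x·y + y·x. Then (A, ⋆, α) is a Hom-Jacobi-Jordan algebra if and only if 2·Σ_{cyclic over (x,y,z)} ((x·y)·α(z) + (y·x)·α(z)) = 0 for all x, y, z ∈ A. -/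
/-- For a Hom-associative algebra (A, ·, α) with anticommutator
x⋆y := x·y + y·x, the pair (A, ⋆, α) is a Hom-Jacobi-Jordan algebra iff
2·Σ_cyclic ((x·y)·α(z) + (y·x)·α(z)) = 0 for all x, y, z. -/
theorem stmt_2 {K A : Type*} [Field K] [CharZero K] [AddCommGroup A] [Module K A]
    (mul : A → A → A) (α : A →ₗ[K] A)
    (haddl : ∀ x y z : A, mul (x + y) z = mul x z + mul y z)
    (hsmull : ∀ (c : K) (x y : A), mul (c • x) y = c • mul x y)
    (haddr : ∀ x y z : A, mul x (y + z) = mul x y + mul x z)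
    (hsmulr : ∀ (c : K) (x y : A), mul x (c • y) = c • mul x y)
    (hmult : ∀ x y : A, α (mul x y) = mul (α x) (α y))
    (hassoc : ∀ x y z : A, mul (mul x y) (α z) = mul (α x) (mul y z)) :
    IsHomJJ (fun x y => mul x y + mul y x) α ↔
      ∀ x y z : A,
        (2 : K) • ((mul (mul x y) (α z) + mul (mul y x) (α z)) +
                   (mul (mul y z) (α x) + mul (mul z y) (α x)) +
                   (mul (mul z x) (α y) + mul (mul x z) (α y))) = 0 := by
  have key : ∀ x y z : A,
      (mul (mul x y + mul y x) (α z) + mul (α z) (mul x y + mul y x)) +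
      (mul (mul y z + mul z y) (α x) + mul (α x) (mul y z + mul z y)) +
      (mul (mul z x + mul x z) (α y) + mul (α y) (mul z x + mul x z)) =
      (2 : K) • ((mul (mul x y) (α z) + mul (mul y x) (α z)) +
                 (mul (mul y z) (α x) + mul (mul z y) (α x)) +
                 (mul (mul z x) (α y) + mul (mul x z) (α y))) := by
    intro x y z
    rw [two_smul]
    simp only [haddl, haddr, ← hassoc]
    abel
  constructor
  · rintro ⟨-, -, -, -, -, -, hjac⟩ x y z
    rw [← key]
    exact hjac x y z
  · intro h
    refine ⟨?_, ?_, ?_, ?_, ?_, ?_, ?_⟩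
    · intro x y z; simp only [haddl, haddr]; abel
    · intro c x y; simp only [hsmull, hsmulr, smul_add]
    · intro x y z; simp only [haddl, haddr]; abel
    · intro c x y; simp only [hsmull, hsmulr, smul_add]
    · intro x y; simp only [map_add, hmult]
    · intro x y; simp only [add_comm]
    · intro x y z
      simpa only [key] using h x y z
end

section
/- Let (A₁, *₁, α₁) and (A₂, *₂, α₂) be Hom-Jacobi-Jordan algebras over a field K of characteristic 0 and let f : A₁ → A₂ be a morphism of Hom-Jacobi-Jordan algebras, i.e. a linear map with f∘α₁ = α₂∘f and f(x *₁ y) = f(x) *₂ f(y) for all x, y ∈ A₁. Then (A₂, ρ, α₂), where ρ : A₁ → End(A₂) is defined by ρ(a)b := f(a) *₂ b, is a representation of (A₁, *₁, α₁). -/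
/-- A representation (V, ρ, φ) of a Hom-Jacobi-Jordan algebra (A, mul, α):
ρ : A → End(V) is linear (expressed pointwise), φ∘ρ(x) = ρ(α x)∘φ and
ρ(x*y)∘φ = −ρ(α x)∘ρ(y) − ρ(α y)∘ρ(x). -/
def IsRep {K A V : Type*} [Field K] [AddCommGroup A] [Module K A]
    [AddCommGroup V] [Module K V]
    (mul : A → A → A) (α : A →ₗ[K] A) (ρ : A → V → V) (φ : V →ₗ[K] V) : Prop :=
  (∀ (x y : A) (v : V), ρ (x + y) v = ρ x v + ρ y v) ∧
  (∀ (c : K) (x : A) (v : V), ρ (c • x) v = c • ρ x v) ∧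
  (∀ (x : A) (v w : V), ρ x (v + w) = ρ x v + ρ x w) ∧
  (∀ (c : K) (x : A) (v : V), ρ x (c • v) = c • ρ x v) ∧
  (∀ (x : A) (v : V), φ (ρ x v) = ρ (α x) (φ v)) ∧
  (∀ (x y : A) (v : V), ρ (mul x y) (φ v) = -ρ (α x) (ρ y v) - ρ (α y) (ρ x v))

/-- If f : A₁ → A₂ is a morphism of Hom-Jacobi-Jordan algebras, then
(A₂, ρ, α₂) with ρ(a)b := f(a) *₂ b is a representation of (A₁, *₁, α₁). -/
theorem stmt_3 {K A₁ A₂ : Type*} [Field K] [CharZero K]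
    [AddCommGroup A₁] [Module K A₁] [AddCommGroup A₂] [Module K A₂]
    (mul₁ : A₁ → A₁ → A₁) (α₁ : A₁ →ₗ[K] A₁)
    (mul₂ : A₂ → A₂ → A₂) (α₂ : A₂ →ₗ[K] A₂)
    (h₁ : IsHomJJ mul₁ α₁) (h₂ : IsHomJJ mul₂ α₂)
    (f : A₁ →ₗ[K] A₂)
    (hfα : ∀ x : A₁, f (α₁ x) = α₂ (f x))
    (hfmul : ∀ x y : A₁, f (mul₁ x y) = mul₂ (f x) (f y)) :
    IsRep mul₁ α₁ (fun a b => mul₂ (f a) b) α₂ := by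
  obtain ⟨l2, sl2, r2, sr2, am2, c2, j2⟩ := h₂
  refine ⟨?_, ?_, ?_, ?_, ?_, ?_⟩
  · intro x y v; simp [map_add, l2]
  · intro c x v; simp [map_smul, sl2]
  · intro x v w; simp [r2]
  · intro c x v; simp [sr2]
  · intro x v; simp [am2, hfα]
  · intro x y v
    simp only [hfmul, hfα]
    rw [c2 (α₂ (f x)) (mul₂ (f y) v), c2 (α₂ (f y)) (mul₂ (f x) v)]
    have h := j2 (f x) (f y) v
    rw [c2 v (f x), add_assoc] at h
    rw [sub_eq_add_neg, ← neg_add]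
    exact eq_neg_of_add_eq_zero_left h
end

section
/- Let (V, ρ, φ) be a representation of a Hom-Jacobi-Jordan algebra (A, *, α) over a field K of characteristic 0, and let β : A → A be a morphism of (A, *, α) to itself (β linear, β(x*y) = β(x)*β(y), β∘α = α∘β). Then for every natural number n, (V, ρ∘βⁿ, φ) is again a representation of (A, *, α). In particular, (V, ρ∘αⁿ, φ) is a representation of (A, *, α) for each n. -/
private lemma rep_comp {K A V : Type*} [Field K]
    [AddCommGroup A] [Module K A] [AddCommGroup V] [Module K V]
    (mul : A → A → A) (α : A →ₗ[K] A)
    (ρ : A → V → V) (φ : V →ₗ[K] V)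
    (hrep : IsRep mul α ρ φ)
    (β : A →ₗ[K] A)
    (hβmul : ∀ x y : A, β (mul x y) = mul (β x) (β y))
    (hβα : ∀ x : A, β (α x) = α (β x)) :
    ∀ n : ℕ, IsRep mul α (fun x v => ρ ((β ^ n) x) v) φ := by
  obtain ⟨h1, h2, h3, h4, h5, h6⟩ := hrep
  intro n
  have hmuln : ∀ x y : A, (β ^ n) (mul x y) = mul ((β ^ n) x) ((β ^ n) y) := by
    induction n with
    | zero => simp
    | succ n ih =>
      intro x y
      simp only [pow_succ, Module.End.mul_apply, hβmul, ih]
  have hαn : ∀ x : A, (β ^ n) (α x) = α ((β ^ n) x) := by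
    clear hmuln
    induction n with
    | zero => simp
    | succ n ih =>
      intro x
      simp only [pow_succ, Module.End.mul_apply, hβα, ih]
  refine ⟨?_, ?_, ?_, ?_, ?_, ?_⟩
  · intro x y v; simp [map_add, h1]
  · intro c x v; simp [map_smul, h2]
  · intro x v w; simp [h3]
  · intro c x v; simp [h4]
  · intro x v; simp [h5, hαn]
  · intro x y v; simp [hmuln, h6, hαn]

/-- If (V, ρ, φ) is a representation of a Hom-Jacobi-Jordan algebra
(A, *, α) and β is a self-morphism of (A, *, α), then (V, ρ∘βⁿ, φ) is again a
representation for every n; in particular (V, ρ∘αⁿ, φ) is a representation. -/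
theorem stmt_4 {K A V : Type*} [Field K] [CharZero K]
    [AddCommGroup A] [Module K A] [AddCommGroup V] [Module K V]
    (mul : A → A → A) (α : A →ₗ[K] A)
    (hA : IsHomJJ mul α)
    (ρ : A → V → V) (φ : V →ₗ[K] V)
    (hrep : IsRep mul α ρ φ)
    (β : A →ₗ[K] A)
    (hβmul : ∀ x y : A, β (mul x y) = mul (β x) (β y))
    (hβα : ∀ x : A, β (α x) = α (β x)) :
    (∀ n : ℕ, IsRep mul α (fun x v => ρ ((β ^ n) x) v) φ) ∧
    (∀ n : ℕ, IsRep mul α (fun x v => ρ ((α ^ n) x) v) φ) := by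
  have hαmul := hA.2.2.2.2.1
  exact ⟨rep_comp mul α ρ φ hrep β hβmul hβα,
    rep_comp mul α ρ φ hrep α hαmul (fun _ => rfl)⟩
end

section
/- Let (A, *, α) be a Hom-Jacobi-Jordan algebra over a field K of characteristic 0, V a K-vector space, ρ : A → End(V) a linear map, and φ ∈ End(V) with φ∘ρ(x) = ρ(α(x))∘φ for all x ∈ A. Then (V, ρ, φ) is a representation of (A, *, α) if and only if the direct sum A ⊕ V equipped with the product (x+u)◇(y+v) := x*y + ρ(x)v + ρ(y)u and the linear map (α⊕φ)(x+u) := α(x) + φ(u) is a Hom-Jacobi-Jordan algebra (the semi-direct product A ⋉ V). -/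
/-! Bilinearity, multiplicativity of `α ⊕ φ` and the Hom-Jacobi identity of the semi-direct
product split into an `A`-component, which is the structure of `A`, and a `V`-component. With `ρ`
linear, the `V`-component of the Hom-Jacobi identity at `(x, u), (y, v), (z, w)` is the sum of
the representation identity at `(x, y, w)`, `(y, z, u)` and `(z, x, v)`; conversely that identity
is the `V`-component at `(x, 0), (y, 0), (0, v)`. Linearity of `ρ` and `φ ∘ ρ x = ρ (α x) ∘ φ`
are recovered the same way once `ρ x 0 = ρ 0 v = 0`; this needs `2 ≠ 0`, since bilinearity of the
semi-direct product only gives `ρ x 0 + ρ 0 u = 0`. -/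

section SemidirectProduct

variable {K A V : Type*} [Field K] [AddCommGroup A] [Module K A] [AddCommGroup V] [Module K V]
  {mul : A → A → A} {α : A →ₗ[K] A} {ρ : A → V → V} {φ : V →ₗ[K] V}

def semidirectMul (mul : A → A → A) (ρ : A → V → V) (p q : A × V) : A × V :=
  (mul p.1 q.1, ρ p.1 q.2 + ρ q.1 p.2)

theorem IsHomJJ.mul_zero (h : IsHomJJ mul α) (x : A) : mul x 0 = 0 := by
  simpa using h.2.2.2.1 0 x 0

theorem IsRep.isHomJJ_semidirectMul (hA : IsHomJJ mul α) (hρ : IsRep mul α ρ φ) :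
    IsHomJJ (semidirectMul mul ρ) (α.prodMap φ) := by
  obtain ⟨hadd_left, hsmul_left, hadd_right, hsmul_right, hα, hcomm, hjac⟩ := hA
  obtain ⟨hρ_add_left, hρ_smul_left, hρ_add_right, hρ_smul_right, hφρ, hρ_mul⟩ := hρ
  refine ⟨?_, ?_, ?_, ?_, ?_, ?_, ?_⟩
  · rintro ⟨x, u⟩ ⟨y, v⟩ ⟨z, w⟩
    refine Prod.ext (hadd_left x y z) ?_
    simp only [semidirectMul, Prod.fst_add, Prod.snd_add, hρ_add_left, hρ_add_right]
    abel
  · rintro c ⟨x, u⟩ ⟨y, v⟩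
    refine Prod.ext (hsmul_left c x y) ?_
    simp only [semidirectMul, Prod.smul_fst, Prod.smul_snd, hρ_smul_left, hρ_smul_right, smul_add]
  · rintro ⟨x, u⟩ ⟨y, v⟩ ⟨z, w⟩
    refine Prod.ext (hadd_right x y z) ?_
    simp only [semidirectMul, Prod.fst_add, Prod.snd_add, hρ_add_left, hρ_add_right]
    abel
  · rintro c ⟨x, u⟩ ⟨y, v⟩
    refine Prod.ext (hsmul_right c x y) ?_
    simp only [semidirectMul, Prod.smul_fst, Prod.smul_snd, hρ_smul_left, hρ_smul_right, smul_add]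
  · rintro ⟨x, u⟩ ⟨y, v⟩
    refine Prod.ext (hα x y) ?_
    simp only [semidirectMul, LinearMap.prodMap_apply, map_add, hφρ]
  · rintro ⟨x, u⟩ ⟨y, v⟩
    exact Prod.ext (hcomm x y) (add_comm _ _)
  · rintro ⟨x, u⟩ ⟨y, v⟩ ⟨z, w⟩
    refine Prod.ext (hjac x y z) ?_
    simp only [semidirectMul, LinearMap.prodMap_apply, Prod.snd_add, Prod.snd_zero, hρ_add_right,
      hρ_mul x y w, hρ_mul y z u, hρ_mul z x v]
    abel

theorem IsHomJJ.isRep_of_semidirectMul (h2 : (2 : K) ≠ 0)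
    (h : IsHomJJ (semidirectMul mul ρ) (α.prodMap φ)) : IsRep mul α ρ φ := by
  have hzero (x : A) (u : V) : ρ x 0 + ρ 0 u = 0 := congrArg Prod.snd (h.mul_zero (x, u))
  have hρ00 : ρ 0 0 = 0 := by
    have hsum : (2 : K) • ρ 0 0 = 0 := by rw [two_smul]; exact hzero 0 0
    exact (smul_eq_zero.mp hsum).resolve_left h2
  have hρ_zero_right (x : A) : ρ x 0 = 0 := by simpa [hρ00] using hzero x 0
  have hρ_zero_left (v : V) : ρ 0 v = 0 := by simpa [hρ00] using hzero 0 v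
  obtain ⟨hadd_left, hsmul_left, hadd_right, hsmul_right, hα, -, hjac⟩ := h
  refine ⟨fun x y v => ?_, fun c x v => ?_, fun x v w => ?_, fun c x v => ?_, fun x v => ?_,
    fun x y v => ?_⟩
  · simpa [semidirectMul, hρ_zero_right] using congrArg Prod.snd (hadd_left (x, 0) (y, 0) (0, v))
  · simpa [semidirectMul, hρ_zero_right] using congrArg Prod.snd (hsmul_left c (x, 0) (0, v))
  · simpa [semidirectMul, hρ_zero_left] using congrArg Prod.snd (hadd_right (x, 0) (0, v) (0, w))
  · simpa [semidirectMul, hρ_zero_left] using congrArg Prod.snd (hsmul_right c (x, 0) (0, v))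
  · simpa [semidirectMul, hρ_zero_left] using congrArg Prod.snd (hα (x, 0) (0, v))
  · have := congrArg Prod.snd (hjac (x, 0) (y, 0) (0, v))
    simp only [semidirectMul, LinearMap.prodMap_apply, Prod.snd_add, Prod.snd_zero, hρ_zero_left,
      hρ_zero_right, map_zero, add_zero, zero_add] at this
    linear_combination (norm := abel) this

end SemidirectProduct

theorem stmt_5_general {K A V : Type*} [Field K] [CharZero K]
    [AddCommGroup A] [Module K A] [AddCommGroup V] [Module K V]
    (mul : A → A → A) (α : A →ₗ[K] A)
    (hA : IsHomJJ mul α)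
    (ρ : A → V → V) (φ : V →ₗ[K] V) :
    IsRep mul α ρ φ ↔
      IsHomJJ (fun p q : A × V => (mul p.1 q.1, ρ p.1 q.2 + ρ q.1 p.2))
        (α.prodMap φ) :=
  ⟨fun hρ => hρ.isHomJJ_semidirectMul hA, IsHomJJ.isRep_of_semidirectMul two_ne_zero⟩

/-- (V, ρ, φ) is a representation of the Hom-Jacobi-Jordan algebra
(A, *, α) iff the direct sum A ⊕ V with product (x+u)◇(y+v) := x*y + ρ(x)v + ρ(y)u
and structure map α⊕φ is a Hom-Jacobi-Jordan algebra (the semi-direct product). -/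
theorem stmt_5 {K A V : Type*} [Field K] [CharZero K]
    [AddCommGroup A] [Module K A] [AddCommGroup V] [Module K V]
    (mul : A → A → A) (α : A →ₗ[K] A)
    (hA : IsHomJJ mul α)
    (ρ : A → V → V) (φ : V →ₗ[K] V)
    (haddl : ∀ (x y : A) (v : V), ρ (x + y) v = ρ x v + ρ y v)
    (hsmull : ∀ (c : K) (x : A) (v : V), ρ (c • x) v = c • ρ x v)
    (haddr : ∀ (x : A) (v w : V), ρ x (v + w) = ρ x v + ρ x w)
    (hsmulr : ∀ (c : K) (x : A) (v : V), ρ x (c • v) = c • ρ x v)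
    (hφρ : ∀ (x : A) (v : V), φ (ρ x v) = ρ (α x) (φ v)) :
    IsRep mul α ρ φ ↔
      IsHomJJ (fun p q : A × V => (mul p.1 q.1, ρ p.1 q.2 + ρ q.1 p.2))
        (α.prodMap φ) :=
  stmt_5_general mul α hA ρ φ
end

section
/- Let (A, *, α) be a Hom-Jacobi-Jordan algebra over a field K of characteristic 0 with α bijective, and let (V, ρ, φ) be a representation of (A, *, α) with φ invertible. Define ρ̃ : A → End(V*) on the dual space V* by (ρ̃(x)ξ)(u) := ξ(ρ(α(x))(φ⁻²(u))) for x ∈ A, ξ ∈ V*, u ∈ V. Then (V*, ρ̃, (φ⁻¹)*) is a representation of (A, *, α), where (φ⁻¹)* denotes the transpose of φ⁻¹. -/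
/-- A representation (W, ρ, φ) of a Hom-Jacobi-Jordan algebra (A, mul, α), with
ρ valued in endomorphisms: ρ : A → End(W) is linear, φ∘ρ(x) = ρ(α x)∘φ and
ρ(x*y)∘φ = −ρ(α x)∘ρ(y) − ρ(α y)∘ρ(x). -/
def IsRepE {K A W : Type*} [Field K] [AddCommGroup A] [Module K A]
    [AddCommGroup W] [Module K W]
    (mul : A → A → A) (α : A →ₗ[K] A) (ρ : A → Module.End K W)
    (φ : Module.End K W) : Prop :=
  (∀ x y : A, ρ (x + y) = ρ x + ρ y) ∧
  (∀ (c : K) (x : A), ρ (c • x) = c • ρ x) ∧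
  (∀ (x : A) (w : W), φ (ρ x w) = ρ (α x) (φ w)) ∧
  (∀ (x y : A) (w : W), ρ (mul x y) (φ w) = -ρ (α x) (ρ y w) - ρ (α y) (ρ x w))

/-- If (A, *, α) is a Hom-Jacobi-Jordan algebra with α bijective
and (V, ρ, φ) is a representation with φ invertible, then the dual space V*
carries a representation ρ̃ with (ρ̃(x)ξ)(u) := ξ(ρ(α x)(φ⁻²(u))), with respect
to the transpose of φ⁻¹. -/
theorem stmt_6 {K A V : Type*} [Field K] [CharZero K]
    [AddCommGroup A] [Module K A] [AddCommGroup V] [Module K V]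
    (mul : A → A → A) (α : A →ₗ[K] A)
    (hA : IsHomJJ mul α) (hα : Function.Bijective α)
    (ρ : A → Module.End K V) (φ : V ≃ₗ[K] V)
    (hrep : IsRepE mul α ρ φ.toLinearMap) :
    IsRepE mul α
      (fun x =>
        LinearMap.dualMap (ρ (α x) ∘ₗ (φ.symm.toLinearMap ∘ₗ φ.symm.toLinearMap)))
      (LinearMap.dualMap φ.symm.toLinearMap) := by
  obtain ⟨hadd, hsmul, hφ, hmulrep⟩ := hrep
  obtain ⟨-, -, -, -, hmult, -, -⟩ := hA
  have key : ∀ (x : A) (w : V), φ.symm (ρ (α x) w) = ρ x (φ.symm w) := by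
    intro x w
    apply φ.injective
    rw [φ.apply_symm_apply]
    conv_lhs => rw [← φ.apply_symm_apply w]
    exact (hφ x (φ.symm w)).symm
  refine ⟨?_, ?_, ?_, ?_⟩
  · intro x y
    ext ξ u
    simp [map_add, hadd]
  · intro c x
    ext ξ u
    simp [map_smul, hsmul]
  · intro x ξ
    ext u
    simp only [LinearMap.dualMap_apply, LinearMap.coe_comp, Function.comp_apply,
      LinearEquiv.coe_coe, LinearMap.dualMap_apply']
    rw [key (α x)]
  · intro x y ξ
    ext u
    simp only [LinearMap.sub_apply,
      LinearMap.neg_apply, LinearMap.dualMap_apply, LinearMap.coe_comp,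
      Function.comp_apply, LinearEquiv.coe_coe, LinearMap.dualMap_apply']
    rw [key (mul x y), key (α x), key x, key (α y), key y]
    have h := hmulrep x y (φ.symm (φ.symm (φ.symm (φ.symm u))))
    rw [show φ.toLinearMap (φ.symm (φ.symm (φ.symm (φ.symm u)))) = φ.symm (φ.symm (φ.symm u)) from φ.apply_symm_apply _] at h
    rw [h]
    simp [map_neg, map_sub]
    ring
end

section
/- Let (A₁, *, α₁) and (A₂, •, α₂) be Hom-Jacobi-Jordan algebras over a field K of characteristic 0, and let ρ₁ : A₁ → End(A₂) and ρ₂ : A₂ → End(A₁) be representations of A₁ on A₂ (with respect to α₂) and of A₂ on A₁ (with respect to α₁), respectively. Then the direct sum A₁ ⊕ A₂ equipped with the product (x+a)◇(y+b) := (x*y + ρ₂(a)y + ρ₂(b)x) + (a•b + ρ₁(x)b + ρ₁(y)a) and the linear map (α₁⊕α₂)(x+a) := α₁(x) + α₂(a) is a Hom-Jacobi-Jordan algebra if and only if, for all x, y ∈ A₁ and a, b ∈ A₂: (i) ρ₁(α₁(x))(a•b) + (ρ₁(x)a)•α₂(b) + (ρ₁(x)b)•α₂(a) + ρ₁(ρ₂(a)x)(α₂(b))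 + ρ₁(ρ₂(b)x)(α₂(a)) = 0, and (ii) ρ₂(α₂(a))(x*y) + (ρ₂(a)x)*α₁(y) + (ρ₂(a)y)*α₁(x) + ρ₂(ρ₁(x)a)(α₁(y)) + ρ₂(ρ₁(y)a)(α₁(x)) = 0 (i.e. if and only if (A₁, A₂, ρ₁, ρ₂) is a matched pair of Hom-Jacobi-Jordan algebras). -/
/-- Given Hom-Jacobi-Jordan algebras (A₁, *, α₁), (A₂, •, α₂) and mutual
representations ρ₁, ρ₂, the direct sum A₁ ⊕ A₂ with product
(x+a)◇(y+b) := (x*y + ρ₂(a)y + ρ₂(b)x) + (a•b + ρ₁(x)b + ρ₁(y)a) and structure map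
α₁⊕α₂ is a Hom-Jacobi-Jordan algebra iff (A₁, A₂, ρ₁, ρ₂) is a matched pair. -/
theorem stmt_7 {K A₁ A₂ : Type*} [Field K] [CharZero K]
    [AddCommGroup A₁] [Module K A₁] [AddCommGroup A₂] [Module K A₂]
    (mul₁ : A₁ → A₁ → A₁) (α₁ : A₁ →ₗ[K] A₁)
    (mul₂ : A₂ → A₂ → A₂) (α₂ : A₂ →ₗ[K] A₂)
    (h₁ : IsHomJJ mul₁ α₁) (h₂ : IsHomJJ mul₂ α₂)
    (ρ₁ : A₁ → A₂ → A₂) (ρ₂ : A₂ → A₁ → A₁)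
    (hrep₁ : IsRep mul₁ α₁ ρ₁ α₂) (hrep₂ : IsRep mul₂ α₂ ρ₂ α₁) :
    IsHomJJ
      (fun p q : A₁ × A₂ =>
        (mul₁ p.1 q.1 + ρ₂ p.2 q.1 + ρ₂ q.2 p.1,
         mul₂ p.2 q.2 + ρ₁ p.1 q.2 + ρ₁ q.1 p.2))
      (α₁.prodMap α₂) ↔
      ((∀ (x : A₁) (a b : A₂),
          ρ₁ (α₁ x) (mul₂ a b) + mul₂ (ρ₁ x a) (α₂ b) + mul₂ (ρ₁ x b) (α₂ a)
            + ρ₁ (ρ₂ a x) (α₂ b) + ρ₁ (ρ₂ b x) (α₂ a) = 0) ∧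
       (∀ (a : A₂) (x y : A₁),
          ρ₂ (α₂ a) (mul₁ x y) + mul₁ (ρ₂ a x) (α₁ y) + mul₁ (ρ₂ a y) (α₁ x)
            + ρ₂ (ρ₁ x a) (α₁ y) + ρ₂ (ρ₁ y a) (α₁ x) = 0)) := by
  obtain ⟨m1addl, m1smull, m1addr, m1smulr, m1mult, m1comm, m1jac⟩ := h₁
  obtain ⟨m2addl, m2smull, m2addr, m2smulr, m2mult, m2comm, m2jac⟩ := h₂
  obtain ⟨r1addl, r1smull, r1addr, r1smulr, r1comp, r1rep⟩ := hrep₁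
  obtain ⟨r2addl, r2smull, r2addr, r2smulr, r2comp, r2rep⟩ := hrep₂
  have m1z1 : ∀ x : A₁, mul₁ 0 x = 0 := fun x => by
    simpa using m1smull (0 : K) 0 x
  have m1z2 : ∀ x : A₁, mul₁ x 0 = 0 := fun x => by
    simpa using m1smulr (0 : K) x 0
  have m2z1 : ∀ x : A₂, mul₂ 0 x = 0 := fun x => by
    simpa using m2smull (0 : K) 0 x
  have m2z2 : ∀ x : A₂, mul₂ x 0 = 0 := fun x => by
    simpa using m2smulr (0 : K) x 0
  have r1z1 : ∀ v : A₂, ρ₁ 0 v = 0 := fun v => by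
    simpa using r1smull (0 : K) 0 v
  have r1z2 : ∀ x : A₁, ρ₁ x 0 = 0 := fun x => by
    simpa using r1smulr (0 : K) x 0
  have r2z1 : ∀ v : A₁, ρ₂ 0 v = 0 := fun v => by
    simpa using r2smull (0 : K) 0 v
  have r2z2 : ∀ x : A₂, ρ₂ x 0 = 0 := fun x => by
    simpa using r2smulr (0 : K) x 0
  constructor
  · rintro ⟨-, -, -, -, -, -, jac⟩
    constructor
    · intro x a b
      have h := jac (x, 0) (0, a) (0, b)
      simp only [Prod.mk.injEq, Prod.mk_add_mk, LinearMap.prodMap_apply, Prod.map_apply,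
        map_zero, m1z1, m1z2, m2z1, m2z2, r1z1, r1z2, r2z1, r2z2,
        add_zero, zero_add, Prod.mk_eq_zero] at h
      have h2 := h.2
      abel_nf at h2 ⊢
      exact h2
    · intro a x y
      have h := jac (0, a) (x, 0) (y, 0)
      simp only [Prod.mk.injEq, Prod.mk_add_mk, LinearMap.prodMap_apply, Prod.map_apply,
        map_zero, m1z1, m1z2, m2z1, m2z2, r1z1, r1z2, r2z1, r2z2,
        add_zero, zero_add, Prod.mk_eq_zero] at h
      have h1 := h.1
      abel_nf at h1 ⊢
      exact h1
  · rintro ⟨ci, cii⟩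
    refine ⟨?_, ?_, ?_, ?_, ?_, ?_, ?_⟩
    · intro p q r
      simp only [Prod.fst_add, Prod.snd_add, Prod.mk_add_mk, Prod.mk.injEq]
      constructor
      · rw [m1addl, r2addr, r2addl]; abel
      · rw [m2addl, r1addr, r1addl]; abel
    · intro c p q
      simp only [Prod.smul_fst, Prod.smul_snd, Prod.smul_mk, Prod.mk.injEq]
      constructor
      · rw [m1smull, r2smulr, r2smull]; simp [smul_add]
      · rw [m2smull, r1smulr, r1smull]; simp [smul_add]
    · intro p q r
      simp only [Prod.fst_add, Prod.snd_add, Prod.mk_add_mk, Prod.mk.injEq]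
      constructor
      · rw [m1addr, r2addl, r2addr]; abel
      · rw [m2addr, r1addl, r1addr]; abel
    · intro c p q
      simp only [Prod.smul_fst, Prod.smul_snd, Prod.smul_mk, Prod.mk.injEq]
      constructor
      · rw [m1smulr, r2smull, r2smulr]; simp [smul_add]
      · rw [m2smulr, r1smull, r1smulr]; simp [smul_add]
    · intro p q
      simp only [LinearMap.prodMap_apply, Prod.map_apply, map_add, Prod.mk.injEq]
      constructor
      · rw [m1mult, r2comp, r2comp]
      · rw [m2mult, r1comp, r1comp]
    · intro p q
      simp only [Prod.mk.injEq]
      constructor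
      · rw [m1comm]; abel
      · rw [m2comm]; abel
    · rintro ⟨x, a⟩ ⟨y, b⟩ ⟨z, c⟩
      simp only [LinearMap.prodMap_apply, Prod.map_apply, Prod.mk_add_mk, Prod.mk_eq_zero]
      have F1 : ρ₂ (mul₂ a b) (α₁ z) + ρ₂ (α₂ a) (ρ₂ b z) + ρ₂ (α₂ b) (ρ₂ a z) = 0 := by
        rw [r2rep]; abel
      have F2 : ρ₂ (mul₂ b c) (α₁ x) + ρ₂ (α₂ b) (ρ₂ c x) + ρ₂ (α₂ c) (ρ₂ b x) = 0 := by
        rw [r2rep]; abel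
      have F3 : ρ₂ (mul₂ c a) (α₁ y) + ρ₂ (α₂ c) (ρ₂ a y) + ρ₂ (α₂ a) (ρ₂ c y) = 0 := by
        rw [r2rep]; abel
      have G1 : ρ₁ (mul₁ x y) (α₂ c) + ρ₁ (α₁ x) (ρ₁ y c) + ρ₁ (α₁ y) (ρ₁ x c) = 0 := by
        rw [r1rep]; abel
      have G2 : ρ₁ (mul₁ y z) (α₂ a) + ρ₁ (α₁ y) (ρ₁ z a) + ρ₁ (α₁ z) (ρ₁ y a) = 0 := by
        rw [r1rep]; abel
      have G3 : ρ₁ (mul₁ z x) (α₂ b) + ρ₁ (α₁ z) (ρ₁ x b) + ρ₁ (α₁ x) (ρ₁ z b) = 0 := by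
        rw [r1rep]; abel
      constructor
      · have sum0 : (mul₁ (mul₁ x y) (α₁ z) + mul₁ (mul₁ y z) (α₁ x) + mul₁ (mul₁ z x) (α₁ y))
            + (ρ₂ (α₂ a) (mul₁ y z) + mul₁ (ρ₂ a y) (α₁ z) + mul₁ (ρ₂ a z) (α₁ y)
              + ρ₂ (ρ₁ y a) (α₁ z) + ρ₂ (ρ₁ z a) (α₁ y))
            + (ρ₂ (α₂ b) (mul₁ z x) + mul₁ (ρ₂ b z) (α₁ x) + mul₁ (ρ₂ b x) (α₁ z)
              + ρ₂ (ρ₁ z b) (α₁ x) + ρ₂ (ρ₁ x b) (α₁ z))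
            + (ρ₂ (α₂ c) (mul₁ x y) + mul₁ (ρ₂ c x) (α₁ y) + mul₁ (ρ₂ c y) (α₁ x)
              + ρ₂ (ρ₁ x c) (α₁ y) + ρ₂ (ρ₁ y c) (α₁ x))
            + (ρ₂ (mul₂ a b) (α₁ z) + ρ₂ (α₂ a) (ρ₂ b z) + ρ₂ (α₂ b) (ρ₂ a z))
            + (ρ₂ (mul₂ b c) (α₁ x) + ρ₂ (α₂ b) (ρ₂ c x) + ρ₂ (α₂ c) (ρ₂ b x))
            + (ρ₂ (mul₂ c a) (α₁ y) + ρ₂ (α₂ c) (ρ₂ a y) + ρ₂ (α₂ a) (ρ₂ c y)) = 0 := by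
          rw [m1jac x y z, cii a y z, cii b z x, cii c x y, F1, F2, F3]; abel
        rw [m1addl, m1addl, r2addl, r2addl, r2addr, r2addr,
            m1addl, m1addl, r2addl, r2addl, r2addr, r2addr,
            m1addl, m1addl, r2addl, r2addl, r2addr, r2addr] at *
        abel_nf at sum0 ⊢
        exact sum0
      · have sum0 : (mul₂ (mul₂ a b) (α₂ c) + mul₂ (mul₂ b c) (α₂ a) + mul₂ (mul₂ c a) (α₂ b))
            + (ρ₁ (α₁ z) (mul₂ a b) + mul₂ (ρ₁ z a) (α₂ b) + mul₂ (ρ₁ z b) (α₂ a)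
              + ρ₁ (ρ₂ a z) (α₂ b) + ρ₁ (ρ₂ b z) (α₂ a))
            + (ρ₁ (α₁ x) (mul₂ b c) + mul₂ (ρ₁ x b) (α₂ c) + mul₂ (ρ₁ x c) (α₂ b)
              + ρ₁ (ρ₂ b x) (α₂ c) + ρ₁ (ρ₂ c x) (α₂ b))
            + (ρ₁ (α₁ y) (mul₂ c a) + mul₂ (ρ₁ y c) (α₂ a) + mul₂ (ρ₁ y a) (α₂ c)
              + ρ₁ (ρ₂ c y) (α₂ a) + ρ₁ (ρ₂ a y) (α₂ c))
            + (ρ₁ (mul₁ x y) (α₂ c) + ρ₁ (α₁ x) (ρ₁ y c) + ρ₁ (α₁ y) (ρ₁ x c))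
            + (ρ₁ (mul₁ y z) (α₂ a) + ρ₁ (α₁ y) (ρ₁ z a) + ρ₁ (α₁ z) (ρ₁ y a))
            + (ρ₁ (mul₁ z x) (α₂ b) + ρ₁ (α₁ z) (ρ₁ x b) + ρ₁ (α₁ x) (ρ₁ z b)) = 0 := by
          rw [m2jac a b c, ci z a b, ci x b c, ci y c a, G1, G2, G3]; abel
        rw [m2addl, m2addl, r1addl, r1addl, r1addr, r1addr,
            m2addl, m2addl, r1addl, r1addl, r1addr, r1addr,
            m2addl, m2addl, r1addl, r1addl, r1addr, r1addr] at *
        abel_nf at sum0 ⊢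
        exact sum0
end

section
/- Let (A, *, α) be a Hom-Jacobi-Jordan algebra over a field K of characteristic 0 and (V, ρ, φ) a representation of (A, *, α). A linear map T : V → A is an O-operator of (A, *, α) associated to (V, ρ, φ) if and only if the graph Gr(T) := {(T(v), v) : v ∈ V} ⊆ A ⊕ V is a Hom-subalgebra of the semi-direct product A ⋉ V, i.e. Gr(T) is closed under the product ◇ and invariant under α⊕φ. -/
/-- An O-operator T : V → A of the Hom-Jacobi-Jordan algebra (A, mul, α)
associated to the representation (V, ρ, φ). -/
def IsOOp {K A V : Type*} [Field K] [AddCommGroup A] [Module K A]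
    [AddCommGroup V] [Module K V]
    (mul : A → A → A) (ρ : A → V → V) (α : A →ₗ[K] A) (φ : V →ₗ[K] V)
    (T : V →ₗ[K] A) : Prop :=
  (∀ v : V, T (φ v) = α (T v)) ∧
  (∀ u v : V, mul (T u) (T v) = T (ρ (T u) v + ρ (T v) u))

/-- T : V → A is an O-operator of the Hom-Jacobi-Jordan algebra (A, *, α)
associated to the representation (V, ρ, φ) iff the graph of T is a Hom-subalgebra of
the semi-direct product A ⋉ V: closed under the product ◇ and invariant under α⊕φ. -/
theorem stmt_8 {K A V : Type*} [Field K] [CharZero K]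
    [AddCommGroup A] [Module K A] [AddCommGroup V] [Module K V]
    (mul : A → A → A) (α : A →ₗ[K] A)
    (hA : IsHomJJ mul α)
    (ρ : A → V → V) (φ : V →ₗ[K] V)
    (hrep : IsRep mul α ρ φ)
    (T : V →ₗ[K] A) :
    IsOOp mul ρ α φ T ↔
      ((∀ p ∈ {p : A × V | ∃ v : V, p = (T v, v)},
          ∀ q ∈ {p : A × V | ∃ v : V, p = (T v, v)},
            ((mul p.1 q.1, ρ p.1 q.2 + ρ q.1 p.2) : A × V)
              ∈ {p : A × V | ∃ v : V, p = (T v, v)}) ∧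
       (∀ p ∈ {p : A × V | ∃ v : V, p = (T v, v)},
          α.prodMap φ p ∈ {p : A × V | ∃ v : V, p = (T v, v)})) := by
  constructor
  · rintro ⟨h1, h2⟩
    constructor
    · rintro p ⟨u, rfl⟩ q ⟨v, rfl⟩
      exact ⟨ρ (T u) v + ρ (T v) u, by simp [h2 u v]⟩
    · rintro p ⟨u, rfl⟩
      exact ⟨φ u, by simp [h1 u]⟩
  · rintro ⟨h1, h2⟩
    constructor
    · intro v
      obtain ⟨w, hw⟩ := h2 (T v, v) ⟨v, rfl⟩
      simp only [LinearMap.prodMap_apply, Prod.mk.injEq] at hw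
      rw [hw.2, hw.1]
    · intro u v
      obtain ⟨w, hw⟩ := h1 (T u, u) ⟨u, rfl⟩ (T v, v) ⟨v, rfl⟩
      simp only [Prod.mk.injEq] at hw
      rw [hw.2, hw.1]
end

section
/- Let (A, *, α) be a Hom-Jacobi-Jordan algebra over a field K of characteristic 0, (V, ρ, φ) a representation of (A, *, α), and T : V → A a linear map with T∘φ = α∘T. Define T̂ ∈ End(A ⊕ V) by T̂(a+v) := T(v) (landing in the A-component). Then T is an O-operator associated to (V, ρ, φ) if and only if T̂ is a Rota-Baxter operator of weight 0 on the semi-direct product Hom-Jacobi-Jordan algebra A ⋉ V, i.e. T̂(w₁)◇T̂(w₂) = T̂(T̂(w₁)◇w₂ + w₁◇T̂(w₂)) for all w₁, w₂ ∈ A ⊕ V. -/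
/-- The semi-direct product multiplication on A ⊕ V:
(x+u)◇(y+v) := x*y + ρ(x)v + ρ(y)u. -/
def sdMul {A V : Type*} (mul : A → A → A) (ρ : A → V → V) [Add V] :
    A × V → A × V → A × V :=
  fun p q => (mul p.1 q.1, ρ p.1 q.2 + ρ q.1 p.2)

/-- The lift T̂ of T : V → A to A ⊕ V, sending a + v to T(v) (in the A-component). -/
def hatT {K A V : Type*} [Field K] [AddCommGroup A] [Module K A]
    [AddCommGroup V] [Module K V] (T : V →ₗ[K] A) : A × V → A × V :=
  fun p => (T p.2, 0)

/-- Given a representation (V, ρ, φ) of a Hom-Jacobi-Jordan algebra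
(A, *, α) and a linear map T : V → A with T∘φ = α∘T, the map T is an O-operator
associated to (V, ρ, φ) iff T̂ is a Rota-Baxter operator of weight 0 on the
semi-direct product A ⋉ V. -/
theorem stmt_9 {K A V : Type*} [Field K] [CharZero K]
    [AddCommGroup A] [Module K A] [AddCommGroup V] [Module K V]
    (mul : A → A → A) (α : A →ₗ[K] A)
    (hA : IsHomJJ mul α)
    (ρ : A → V → V) (φ : V →ₗ[K] V)
    (hrep : IsRep mul α ρ φ)
    (T : V →ₗ[K] A)
    (hTφ : ∀ v : V, T (φ v) = α (T v)) :
    IsOOp mul ρ α φ T ↔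
      ∀ w₁ w₂ : A × V,
        sdMul mul ρ (hatT T w₁) (hatT T w₂) =
          hatT T (sdMul mul ρ (hatT T w₁) w₂ + sdMul mul ρ w₁ (hatT T w₂)) := by
  obtain ⟨hr1, hr2, hr3, hr4, hr5, hr6⟩ := hrep
  have hz : ∀ x : A, ρ x 0 = 0 := by
    intro x
    have := hr3 x 0 0
    simpa using this.symm
  constructor
  · rintro ⟨h1, h2⟩ w₁ w₂
    simp only [sdMul, hatT, Prod.mk_add_mk, Prod.mk.injEq]
    constructor
    · rw [hz, hz, map_add]
      simpa using h2 w₁.2 w₂.2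
    · rw [hz, hz]; abel
  · intro h
    refine ⟨hTφ, fun u v => ?_⟩
    have := h (0, u) (0, v)
    simp only [sdMul, hatT, Prod.mk_add_mk, Prod.mk.injEq] at this
    rw [hz, hz, map_add] at this
    have h1 := this.1
    rw [map_add] at h1
    simpa using h1
end

section
/- Let (A, *, α) be a Hom-Jacobi-Jordan algebra over a field K of characteristic 0, (V, ρ, φ) a representation of (A, *, α), and T : V → A a linear map with T∘φ = α∘T. Define N_T ∈ End(A ⊕ V) by N_T(a+v) := T(v) (landing in the A-component). Then T is an O-operator associated to (V, ρ, φ) if and only if N_T is a Nijenhuis operator on the semi-direct product Hom-Jacobi-Jordan algebra A ⋉ V, i.e. N_T∘(α⊕φ) = (α⊕φ)∘N_T and N_T(w₁)◇N_T(w₂) = N_T(N_T(w₁)◇w₂ + w₁◇N_T(w₂) − N_T(w₁◇w₂)) for all w₁, w₂ ∈ A ⊕ V. -/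
/-- Given a representation (V, ρ, φ) of a Hom-Jacobi-Jordan algebra
(A, *, α) and a linear map T : V → A with T∘φ = α∘T, the map T is an O-operator
associated to (V, ρ, φ) iff N_T is a Nijenhuis operator on the semi-direct product
A ⋉ V: N_T commutes with α⊕φ and its Nijenhuis torsion vanishes. -/
theorem stmt_10 {K A V : Type*} [Field K] [CharZero K]
    [AddCommGroup A] [Module K A] [AddCommGroup V] [Module K V]
    (mul : A → A → A) (α : A →ₗ[K] A)
    (hA : IsHomJJ mul α)
    (ρ : A → V → V) (φ : V →ₗ[K] V)
    (hrep : IsRep mul α ρ φ)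
    (T : V →ₗ[K] A)
    (hTφ : ∀ v : V, T (φ v) = α (T v)) :
    IsOOp mul ρ α φ T ↔
      ((∀ w : A × V, hatT T (α.prodMap φ w) = α.prodMap φ (hatT T w)) ∧
       (∀ w₁ w₂ : A × V,
          sdMul mul ρ (hatT T w₁) (hatT T w₂) =
            hatT T (sdMul mul ρ (hatT T w₁) w₂ + sdMul mul ρ w₁ (hatT T w₂)
              - hatT T (sdMul mul ρ w₁ w₂)))) := by
  have hρ0 : ∀ x : A, ρ x (0 : V) = 0 := by
    intro x
    have := hrep.2.2.2.1 (0 : K) x 0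
    simpa using this
  constructor
  · rintro ⟨h1, h2⟩
    constructor
    · intro w
      simp [hatT, LinearMap.prodMap_apply, hTφ]
    · intro w₁ w₂
      simp only [hatT, sdMul, hρ0, add_zero, zero_add]
      refine Prod.ext ?_ rfl
      simp only [Prod.snd, map_add, map_sub, map_zero]
      rw [h2 w₁.2 w₂.2]
      abel_nf
      simp [map_add]
  · rintro ⟨h1, h2⟩
    refine ⟨hTφ, ?_⟩
    intro u v
    have := h2 (0, u) (0, v)
    simp only [hatT, sdMul, hρ0, add_zero, zero_add] at this
    have h := congrArg Prod.fst this
    simpa [map_add] using h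
end

section
/- Let (A, ·, α) be a left Hom-pre-Jacobi-Jordan algebra over a field K of characteristic 0. Then the product x⋆y := x·y + y·x defines a Hom-Jacobi-Jordan algebra structure (A, ⋆, α) on A (the sub-adjacent Hom-Jacobi-Jordan algebra). -/
/-- A left Hom-pre-Jacobi-Jordan algebra structure: the multiplication is bilinear,
the structure map is multiplicative, and the anti-Hom-associator is left skew-symmetric. -/
def IsHomPreJJ {K A : Type*} [Field K] [AddCommGroup A] [Module K A]
    (mul : A → A → A) (α : A →ₗ[K] A) : Prop :=
  (∀ x y z : A, mul (x + y) z = mul x z + mul y z) ∧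
  (∀ (c : K) (x y : A), mul (c • x) y = c • mul x y) ∧
  (∀ x y z : A, mul x (y + z) = mul x y + mul x z) ∧
  (∀ (c : K) (x y : A), mul x (c • y) = c • mul x y) ∧
  (∀ x y : A, α (mul x y) = mul (α x) (α y)) ∧
  (∀ x y z : A, mul (mul x y) (α z) + mul (α x) (mul y z)
      = -mul (mul y x) (α z) - mul (α y) (mul x z))

/-- The anticommutator x⋆y := x·y + y·x of a left
Hom-pre-Jacobi-Jordan algebra (A, ·, α) is a Hom-Jacobi-Jordan algebra structure
on A (the sub-adjacent Hom-Jacobi-Jordan algebra). -/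
theorem stmt_11 {K A : Type*} [Field K] [CharZero K] [AddCommGroup A] [Module K A]
    (mul : A → A → A) (α : A →ₗ[K] A)
    (hA : IsHomPreJJ mul α) :
    IsHomJJ (fun x y => mul x y + mul y x) α := by

  obtain ⟨hl, hsl, hr, hsr, hm, hskew⟩ := hA
  refine ⟨?_, ?_, ?_, ?_, ?_, ?_, ?_⟩
  · intro x y z; simp only [hl, hr]; abel
  · intro c x y; simp only [hsl, hsr, smul_add]
  · intro x y z; simp only [hl, hr]; abel
  · intro c x y; simp only [hsl, hsr, smul_add]
  · intro x y; simp only [map_add, hm]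
  · intro x y; simp only []; abel
  · intro x y z
    have S : ∀ a b c : A, mul (mul a b) (α c) + mul (α a) (mul b c) +
        (mul (mul b a) (α c) + mul (α b) (mul a c)) = 0 := by
      intro a b c; rw [hskew a b c]; abel
    have h1 := S x y z
    have h2 := S y z x
    have h3 := S z x y
    simp only [hl, hr]
    calc mul (mul x y) (α z) + mul (mul y x) (α z) + (mul (α z) (mul x y) + mul (α z) (mul y x)) +
          (mul (mul y z) (α x) + mul (mul z y) (α x) + (mul (α x) (mul y z) + mul (α x) (mul z y))) +
          (mul (mul z x) (α y) + mul (mul x z) (α y) + (mul (α y) (mul z x) + mul (α y) (mul x z)))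
        = (mul (mul x y) (α z) + mul (α x) (mul y z) +
            (mul (mul y x) (α z) + mul (α y) (mul x z))) +
          (mul (mul y z) (α x) + mul (α y) (mul z x) +
            (mul (mul z y) (α x) + mul (α z) (mul y x))) +
          (mul (mul z x) (α y) + mul (α z) (mul x y) +
            (mul (mul x z) (α y) + mul (α x) (mul z y))) := by abel
      _ = 0 := by rw [h1, h2, h3]; abel
end

section
/- Let (A, ·, α) be a multiplicative Hom-algebra over a field K of characteristic 0 and set x⋆y := x·y + y·x. Then (A, ·, α) is a left Hom-pre-Jacobi-Jordan algebra if and only if (A, ⋆, α) is a Hom-Jacobi-Jordan algebra and (A, L, α) is a representation of (A, ⋆, α), where L : A → End(A) is the left multiplication operator L(x)y := x·y. -/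
/-- A multiplicative Hom-algebra (A, ·, α) is a left
Hom-pre-Jacobi-Jordan algebra iff (A, ⋆, α), x⋆y := x·y + y·x, is a
Hom-Jacobi-Jordan algebra and the left multiplication L (L(x)y := x·y) makes
(A, L, α) a representation of (A, ⋆, α). -/
theorem stmt_12 {K A : Type*} [Field K] [CharZero K] [AddCommGroup A] [Module K A]
    (mul : A → A → A) (α : A →ₗ[K] A)
    (haddl : ∀ x y z : A, mul (x + y) z = mul x z + mul y z)
    (hsmull : ∀ (c : K) (x y : A), mul (c • x) y = c • mul x y)
    (haddr : ∀ x y z : A, mul x (y + z) = mul x y + mul x z)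
    (hsmulr : ∀ (c : K) (x y : A), mul x (c • y) = c • mul x y)
    (hmult : ∀ x y : A, α (mul x y) = mul (α x) (α y)) :
    IsHomPreJJ mul α ↔
      (IsHomJJ (fun x y => mul x y + mul y x) α ∧
       IsRep (fun x y => mul x y + mul y x) α mul α) := by

  constructor
  · rintro ⟨_, _, _, _, _, hpre⟩
    have key : ∀ x y z : A, mul (mul x y + mul y x) (α z)
        = -mul (α x) (mul y z) - mul (α y) (mul x z) := by
      intro x y z
      have h := hpre x y z
      rw [haddl]
      linear_combination (norm := abel) h
    refine ⟨⟨?_, ?_, ?_, ?_, ?_, ?_, ?_⟩, ?_, ?_, ?_, ?_, ?_, ?_⟩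
    · intro x y z; simp only [haddl, haddr]; abel
    · intro c x y; simp only [hsmull, hsmulr, smul_add]
    · intro x y z; simp only [haddl, haddr]; abel
    · intro c x y; simp only [hsmull, hsmulr, smul_add]
    · intro x y; simp only [map_add, hmult]
    · intro x y; simp only [add_comm]
    · intro x y z
      simp only
      rw [haddr (α z), haddr (α x), haddr (α y), key x y z, key y z x, key z x y]
      abel
    · intro x y v; simp only [haddl]
    · intro c x v; simp only [hsmull]
    · intro x v w; simp only [haddr]
    · intro c x v; simp only [hsmulr]
    · intro x v; simp only [hmult]
    · intro x y v
      have h := hpre x y v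
      simp only
      rw [haddl]
      linear_combination (norm := abel) h
  · rintro ⟨-, ⟨-, -, -, -, -, hrep⟩⟩
    refine ⟨haddl, hsmull, haddr, hsmulr, hmult, ?_⟩
    intro x y z
    have h := hrep x y z
    simp only [haddl] at h
    linear_combination (norm := abel) h
end

section
/- Let (A, *, α) be a Hom-Jacobi-Jordan algebra over a field K of characteristic 0, (V, ρ, φ) a representation of (A, *, α), and T : V → A an O-operator associated to (V, ρ, φ). Then (V, ·, φ), where u·v := ρ(T(u))v, is a left Hom-pre-Jacobi-Jordan algebra, and T is a homomorphism from its sub-adjacent Hom-Jacobi-Jordan algebra (V, ⋆, φ) (u⋆v := u·v + v·u) to (A, *, α), i.e. T(u⋆v) = T(u)*T(v) for all u, v ∈ V. -/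
/-- If T is an O-operator of a Hom-Jacobi-Jordan algebra (A, *, α)
associated to a representation (V, ρ, φ), then u·v := ρ(T(u))v makes (V, ·, φ) a
left Hom-pre-Jacobi-Jordan algebra, and T is a homomorphism from its sub-adjacent
Hom-Jacobi-Jordan algebra (V, ⋆, φ) to (A, *, α). -/
theorem stmt_13 {K A V : Type*} [Field K] [CharZero K]
    [AddCommGroup A] [Module K A] [AddCommGroup V] [Module K V]
    (mul : A → A → A) (α : A →ₗ[K] A)
    (hA : IsHomJJ mul α)
    (ρ : A → V → V) (φ : V →ₗ[K] V)
    (hrep : IsRep mul α ρ φ)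
    (T : V →ₗ[K] A)
    (hT : IsOOp mul ρ α φ T) :
    IsHomPreJJ (fun u v => ρ (T u) v) φ ∧
      ∀ u v : V, T (ρ (T u) v + ρ (T v) u) = mul (T u) (T v) := by
  obtain ⟨radd, rsmul, raddv, rsmulv, rphi, rmul⟩ := hrep
  obtain ⟨hTphi, hTO⟩ := hT
  refine ⟨⟨?_, ?_, ?_, ?_, ?_, ?_⟩, fun u v => (hTO u v).symm⟩
  · intro x y z; simp [map_add, radd]
  · intro c x y; simp [map_smul, rsmul]
  · intro x y z; exact raddv _ _ _
  · intro c x y; exact rsmulv _ _ _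
  · intro x y; simp only [map_add]; rw [rphi, hTphi]
  · intro x y z
    have h1 : ρ (T (ρ (T x) y)) (φ z) + ρ (T (ρ (T y) x)) (φ z)
        = ρ (mul (T x) (T y)) (φ z) := by
      rw [hTO, map_add, radd]
    have h2 : ρ (mul (T x) (T y)) (φ z)
        = -ρ (α (T x)) (ρ (T y) z) - ρ (α (T y)) (ρ (T x) z) := rmul _ _ _
    simp only [← hTphi] at h2
    simp only []
    linear_combination (norm := abel) h1.trans h2
end

section
/- Let (A, *, α) be a Hom-Jacobi-Jordan algebra over a field K of characteristic 0, and let P : A → A be a Rota-Baxter operator of weight 0 on A commuting with α, i.e. P∘α = α∘P and P(x)*P(y) = P(P(x)*y + x*P(y)) for all x, y ∈ A. Then the product x·y := P(x)*y makes (A, ·, α) a left Hom-pre-Jacobi-Jordan algebra. -/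
/-- If P is a Rota-Baxter operator of weight 0 on a
Hom-Jacobi-Jordan algebra (A, *, α) commuting with α, then x·y := P(x)*y
makes (A, ·, α) a left Hom-pre-Jacobi-Jordan algebra. -/
theorem stmt_14 {K A : Type*} [Field K] [CharZero K] [AddCommGroup A] [Module K A]
    (mul : A → A → A) (α : A →ₗ[K] A)
    (hA : IsHomJJ mul α)
    (P : A →ₗ[K] A)
    (hPα : ∀ x : A, P (α x) = α (P x))
    (hRB : ∀ x y : A, mul (P x) (P y) = P (mul (P x) y + mul x (P y))) :
    IsHomPreJJ (fun x y => mul (P x) y) α := by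
  obtain ⟨hl, hls, hr, hrs, hα, hc, hJ⟩ := hA
  refine ⟨fun x y z => by simp [P.map_add, hl],
    fun c x y => by simp [P.map_smul, hls],
    fun x y z => hr _ _ _,
    fun c x y => hrs _ _ _,
    fun x y => by simp [hα, hPα],
    fun x y z => ?_⟩
  have key := hJ (P x) (P y) z
  have hsum : P (mul (P x) y) + P (mul (P y) x)
      = mul (P x) (P y) := by
    rw [hRB, ← P.map_add, hc (P y) x]
  have e : mul (P (mul (P x) y)) (α z) + mul (α (P x)) (mul (P y) z)
      + (mul (P (mul (P y) x)) (α z) + mul (α (P y)) (mul (P x) z)) = 0 := by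
    have h1 : mul (P (mul (P x) y)) (α z) + mul (P (mul (P y) x)) (α z)
        = mul (mul (P x) (P y)) (α z) := by rw [← hl, hsum]
    have h2 : mul (P (mul (P x) y)) (α z) + mul (α (P x)) (mul (P y) z)
        + (mul (P (mul (P y) x)) (α z) + mul (α (P y)) (mul (P x) z))
        = (mul (P (mul (P x) y)) (α z) + mul (P (mul (P y) x)) (α z))
          + (mul (α (P x)) (mul (P y) z) + mul (α (P y)) (mul (P x) z)) := by abel
    rw [h2, h1, hc (α (P x)) (mul (P y) z), hc (α (P y)) (mul (P x) z), hc (P x) z,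
      ← key]
    abel
  simp only [hPα]
  refine eq_sub_of_add_eq (eq_neg_of_add_eq_zero_left ?_)
  rw [← e]; abel
end

section
/- Let (A, *, α) be a Hom-Jacobi-Jordan algebra over a field K of characteristic 0. Then there exists a compatible left Hom-pre-Jacobi-Jordan algebra structure on A (i.e. a bilinear product · on A such that (A, ·, α) is a left Hom-pre-Jacobi-Jordan algebra with x·y + y·x = x*y for all x, y ∈ A) if and only if there exist a representation (V, ρ, φ) of (A, *, α) and an invertible O-operator T : V → A of (A, *, α) associated to (V, ρ, φ). -/
universe u

/-- A Hom-Jacobi-Jordan algebra (A, *, α) admits a compatible left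
Hom-pre-Jacobi-Jordan structure (a product · with x·y + y·x = x*y) iff there exist
a representation (V, ρ, φ) of (A, *, α) and an invertible O-operator T : V → A
associated to it. -/
theorem stmt_15 {K : Type*} {A : Type u} [Field K] [CharZero K]
    [AddCommGroup A] [Module K A]
    (mul : A → A → A) (α : A →ₗ[K] A)
    (hA : IsHomJJ mul α) :
    (∃ pmul : A → A → A, IsHomPreJJ pmul α ∧
        ∀ x y : A, pmul x y + pmul y x = mul x y) ↔
      (∃ (V : Type u) (_ : AddCommGroup V) (_ : Module K V)
          (ρ : A → V → V) (φ : V →ₗ[K] V) (T : V →ₗ[K] A),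
            IsRep mul α ρ φ ∧ IsOOp mul ρ α φ T ∧ Function.Bijective T) := by
  constructor
  · rintro ⟨p, ⟨p1, p2, p3, p4, p5, p6⟩, hcomp⟩
    refine ⟨A, inferInstance, inferInstance, p, α, LinearMap.id,
      ⟨p1, p2, p3, p4, p5, ?_⟩, ⟨?_, ?_⟩, Function.bijective_id⟩
    · intro x y v
      have h6 := p6 x y v
      rw [← hcomp x y, p1]
      rw [← sub_eq_zero] at h6 ⊢
      rw [← h6]; abel
    · intro v; simp
    · intro u v
      simp only [LinearMap.id_coe, id_eq]
      exact (hcomp u v).symm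
  · rintro ⟨V, _, _, ρ, φ, T, ⟨r1, r2, r3, r4, r5, r6⟩, ⟨o1, o2⟩, hT⟩
    let e := LinearEquiv.ofBijective T hT
    have hST : ∀ a : A, T (e.symm a) = a := fun a => e.apply_symm_apply a
    have hTS : ∀ u : V, e.symm (T u) = u := fun u => e.symm_apply_apply u
    have hSα : ∀ a : A, e.symm (α a) = φ (e.symm a) := by
      intro a
      have h1 : T (φ (e.symm a)) = α a := by rw [o1, hST]
      rw [← h1, hTS]
    set pm : A → A → A := fun x y => T (ρ x (e.symm y)) with hpm
    have hcomp : ∀ x y : A, pm x y + pm y x = mul x y := by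
      intro x y
      have h2 := o2 (e.symm x) (e.symm y)
      rw [hST, hST] at h2
      simp only [hpm]
      rw [← map_add, h2]
    refine ⟨pm, ⟨?_, ?_, ?_, ?_, ?_, ?_⟩, hcomp⟩
    · intro x y z; simp only [hpm, r1, map_add]
    · intro c x y; simp only [hpm, r2, map_smul]
    · intro x y z; simp only [hpm, map_add, r3]
    · intro c x y; simp only [hpm, map_smul, r4]
    · intro x y; simp only [hpm]; rw [← o1, r5, hSα]
    · intro x y z
      have h2 := o2 (e.symm x) (e.symm y)
      rw [hST, hST] at h2
      have key : pm (pm x y) (α z) + pm (pm y x) (α z)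
          = T (-(ρ (α x) (ρ y (e.symm z))) - ρ (α y) (ρ x (e.symm z))) := by
        simp only [hpm]
        rw [hSα, ← map_add, ← r1, ← map_add, ← h2, r6]
      have hB1 : pm (α x) (pm y z) = T (ρ (α x) (ρ y (e.symm z))) := by
        simp only [hpm]; rw [hTS]
      have hB2 : pm (α y) (pm x z) = T (ρ (α y) (ρ x (e.symm z))) := by
        simp only [hpm]; rw [hTS]
      have hz : pm (pm x y) (α z) + T (ρ (α x) (ρ y (e.symm z)))
          - (-pm (pm y x) (α z) - T (ρ (α y) (ρ x (e.symm z))))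
          = (pm (pm x y) (α z) + pm (pm y x) (α z))
            - T (-(ρ (α x) (ρ y (e.symm z))) - ρ (α y) (ρ x (e.symm z))) := by
        rw [map_sub, map_neg]; abel
      rw [hB1, hB2, ← sub_eq_zero, hz, key, sub_self]
end

section
/- Let (A, *, α) be a Hom-Jacobi-Jordan algebra over a field K of characteristic 0, (V, ρ, φ) a representation of (A, *, α), and T : V → A an O-operator associated to (V, ρ, φ). Define ρ_T : V → End(A) by ρ_T(u)x := T(u)*x − T(ρ(x)u). Then (A, ρ_T, α) is a representation of the Hom-Jacobi-Jordan algebra (V, ⋆, φ), where u⋆v := ρ(T(u))v + ρ(T(v))u is the sub-adjacent Hom-Jacobi-Jordan product induced on V by the O-operator T. -/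
/-- If T is an O-operator of a Hom-Jacobi-Jordan algebra (A, *, α)
associated to a representation (V, ρ, φ), then ρ_T(u)x := T(u)*x − T(ρ(x)u)
makes (A, ρ_T, α) a representation of the sub-adjacent Hom-Jacobi-Jordan algebra
(V, ⋆, φ), where u⋆v := ρ(T(u))v + ρ(T(v))u. -/
theorem stmt_16 {K A V : Type*} [Field K] [CharZero K]
    [AddCommGroup A] [Module K A] [AddCommGroup V] [Module K V]
    (mul : A → A → A) (α : A →ₗ[K] A)
    (hA : IsHomJJ mul α)
    (ρ : A → V → V) (φ : V →ₗ[K] V)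
    (hrep : IsRep mul α ρ φ)
    (T : V →ₗ[K] A)
    (hT : IsOOp mul ρ α φ T) :
    IsRep (fun u v => ρ (T u) v + ρ (T v) u) φ
      (fun u x => mul (T u) x - T (ρ x u)) α := by
  obtain ⟨ma, msl, mar, msr, hαm, hcomm, hjac⟩ := hA
  obtain ⟨ra, rs, rva, rvs, rφ, rmul⟩ := hrep
  obtain ⟨Tφ, TO⟩ := hT
  -- derived linearity over negation / subtraction
  have mnegr : ∀ x b : A, mul x (-b) = -mul x b := by
    intro x b
    have := msr (-1 : K) x b
    simpa using this
  have msubr : ∀ x a b : A, mul x (a - b) = mul x a - mul x b := by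
    intro x a b
    rw [sub_eq_add_neg, mar, mnegr, sub_eq_add_neg]
  have rneg : ∀ (a : A) (w : V), ρ (-a) w = -ρ a w := by
    intro a w
    have := rs (-1 : K) a w
    simpa using this
  have rsub : ∀ (a b : A) (w : V), ρ (a - b) w = ρ a w - ρ b w := by
    intro a b w
    rw [sub_eq_add_neg, ra, rneg, sub_eq_add_neg]
  have key : ∀ (u : V) (w : V), mul (α (T u)) (T w) = T (ρ (α (T u)) w + ρ (T w) (φ u)) := by
    intro u w
    rw [← Tφ]
    exact TO (φ u) w
  refine ⟨?_, ?_, ?_, ?_, ?_, ?_⟩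
  · intro u v x
    simp only [map_add, ma, rva]
    abel
  · intro c u x
    simp only [map_smul, msl, rvs, smul_sub]
  · intro u x y
    simp only [mar, ra, map_add]
    abel
  · intro c u x
    simp only [msr, rs, map_smul, smul_sub]
  · intro u x
    simp only [map_sub, hαm, Tφ, ← rφ]
  · intro u v x
    beta_reduce
    rw [(TO u v).symm]
    have hj : mul (mul (T u) (T v)) (α x)
        = -mul (α (T u)) (mul (T v) x) - mul (α (T v)) (mul x (T u)) := by
      have h := hjac (T u) (T v) x
      have : mul (mul (T u) (T v)) (α x)
          = -(mul (mul (T v) x) (α (T u)) + mul (mul x (T u)) (α (T v))) := by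
        rw [add_assoc] at h
        exact eq_neg_of_add_eq_zero_left h
      rw [this, hcomm (mul (T v) x) (α (T u)), hcomm (mul x (T u)) (α (T v))]
      abel
    rw [hj, hcomm x (T u)]
    simp only [Tφ, msubr, rsub, rmul, key, map_add, map_sub, map_neg, rva]
    abel
end

section
/- Let (V, ρ, λ, φ) be a representation of a left Hom-pre-Jacobi-Jordan algebra (A, ·, α) over a field K of characteristic 0, and let (A, ⋆, α) with x⋆y := x·y + y·x be its sub-adjacent Hom-Jacobi-Jordan algebra. Then (V, ρ+λ, φ) is a representation of the Hom-Jacobi-Jordan algebra (A, ⋆, α). -/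
/-- A representation (V, ρ, λ, φ) of a left Hom-pre-Jacobi-Jordan algebra (A, mul, α). -/
def IsPreRep {K A V : Type*} [Field K] [AddCommGroup A] [Module K A]
    [AddCommGroup V] [Module K V]
    (mul : A → A → A) (α : A →ₗ[K] A) (ρ lam : A → V → V) (φ : V →ₗ[K] V) : Prop :=
  IsRep (fun x y => mul x y + mul y x) α ρ φ ∧
  (∀ (x y : A) (v : V), lam (x + y) v = lam x v + lam y v) ∧
  (∀ (c : K) (x : A) (v : V), lam (c • x) v = c • lam x v) ∧
  (∀ (x : A) (v w : V), lam x (v + w) = lam x v + lam x w) ∧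
  (∀ (c : K) (x : A) (v : V), lam x (c • v) = c • lam x v) ∧
  (∀ (x : A) (v : V), φ (lam x v) = lam (α x) (φ v)) ∧
  (∀ (x y : A) (v : V), lam (α y) (lam x v) + lam (mul x y) (φ v)
      = -lam (α y) (ρ x v) - ρ (α x) (lam y v))

/-- If (V, ρ, λ, φ) is a representation of a left
Hom-pre-Jacobi-Jordan algebra (A, ·, α), then (V, ρ+λ, φ) is a representation of
the sub-adjacent Hom-Jacobi-Jordan algebra (A, ⋆, α), x⋆y := x·y + y·x. -/
theorem stmt_18 {K A V : Type*} [Field K] [CharZero K]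
    [AddCommGroup A] [Module K A] [AddCommGroup V] [Module K V]
    (mul : A → A → A) (α : A →ₗ[K] A)
    (hA : IsHomPreJJ mul α)
    (ρ lam : A → V → V) (φ : V →ₗ[K] V)
    (hrep : IsPreRep mul α ρ lam φ) :
    IsRep (fun x y => mul x y + mul y x) α (fun x v => ρ x v + lam x v) φ := by
  obtain ⟨⟨r1, r2, r3, r4, r5, r6⟩, l1, l2, l3, l4, l5, l6⟩ := hrep
  refine ⟨?_, ?_, ?_, ?_, ?_, ?_⟩
  · intro x y v; simp only [r1, l1]; abel
  · intro c x v; simp only [r2, l2, smul_add]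
  · intro x v w; simp only [r3, l3]; abel
  · intro c x v; simp only [r4, l4, smul_add]
  · intro x v; simp only [map_add, r5, l5]
  · intro x y v
    have h2 : lam (mul x y) (φ v)
        = -lam (α y) (ρ x v) - ρ (α x) (lam y v) - lam (α y) (lam x v) := by
      have := l6 x y v; linear_combination (norm := abel) this
    have h3 : lam (mul y x) (φ v)
        = -lam (α x) (ρ y v) - ρ (α y) (lam x v) - lam (α x) (lam y v) := by
      have := l6 y x v; linear_combination (norm := abel) this
    simp only [l1, r3, l3, h2, h3, r6 x y v]
    abel
end
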